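/- Let the node set N = {1,…,2n} be partitioned into three arcs R, G, B, each circularly contiguous in the cyclic order 1, 2, …, 2n (an arc may be empty), with |R| = r, |G| = g, |B| = b. Then there exists a planar pairing of N in which no pair has both endpoints in the same arc if and only if r ≤ g + b, g ≤ r + b, and b ≤ r + g; and when such a planar pairing exists, it is unique. -/

import Mathlib

/-!
A pairing with no pair inside an arc maps each arc injectively into the other two, which gives
the triangle inequalities. Conversely, a rotation of the circle, which preserves planarity,
turns the arcs into the intervals `[1, r]`, `[r + 1, r + g]`, `[r + g + 1, 2n]`. Planarity
means that the nodes under a chord are paired among themselves. At the corner `r | r + 1` this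
forces the `k`-th node on one side to pair with the `k`-th node on the other for
`k ≤ r + g - n`: a partner inside the second arc is pinned down by balancing the two arcs under
the chord, and a partner in the third arc is ruled out by counting the second arc under the
chord and the first arc outside it. By rotation the same holds at the other two corners; the
three corners cover all nodes, so the pairing is unique, and nesting the chords around the
corners in this way produces it.
-/

namespace DD

/-- The node set `{1, …, 2n}`. -/
def nodes (n : ℕ) : Finset ℕ := Finset.Icc 1 (2 * n)

/-- `ρ` is a pairing of `{1,…,2n}`: a fixed-point-free involution of the node set. -/
structure IsPairing (n : ℕ) (ρ : ℕ → ℕ) : Prop where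
  maps : ∀ i ∈ nodes n, ρ i ∈ nodes n
  invol : ∀ i ∈ nodes n, ρ (ρ i) = i
  nofix : ∀ i ∈ nodes n, ρ i ≠ i

/-- Number of crossings of `ρ` among pairs of `ρ` contained in `A`:
a crossing is a pair of pairs `(a,c)`, `(b,d)` of `ρ` with `a < b < c < d`. -/
def numCrossingsOn (A : Finset ℕ) (ρ : ℕ → ℕ) : ℕ :=
  ((A ×ˢ A).filter (fun p => p.1 < p.2 ∧ p.2 < ρ p.1 ∧ ρ p.1 < ρ p.2)).card

/-- Number of crossings of a pairing of `{1,…,2n}`. -/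
def numCrossings (n : ℕ) (ρ : ℕ → ℕ) : ℕ := numCrossingsOn (nodes n) ρ

/-- A pairing is planar if it has no crossings. -/
def IsPlanar (n : ℕ) (ρ : ℕ → ℕ) : Prop := numCrossings n ρ = 0

/-- A coloring `c : ℕ → Bool` of the nodes: `true` = black, `false` = white.
A black-white pairing pairs each black node with a white node. -/
def IsBW (n : ℕ) (c : ℕ → Bool) (ρ : ℕ → ℕ) : Prop :=
  ∀ i ∈ nodes n, c (ρ i) = !(c i)

/-- An odd-even pairing pairs each odd node with an even node. -/
def IsOE (n : ℕ) (ρ : ℕ → ℕ) : Prop :=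
  ∀ i ∈ nodes n, ρ i % 2 ≠ i % 2

/-- The coloring has exactly `n` black (hence exactly `n` white) nodes. -/
def BalancedColoring (n : ℕ) (c : ℕ → Bool) : Prop :=
  ((nodes n).filter (fun i => c i = true)).card = n

/-- The black nodes. -/
def blacks (n : ℕ) (c : ℕ → Bool) : Finset ℕ := (nodes n).filter (fun i => c i = true)

/-- The white nodes. -/
def whites (n : ℕ) (c : ℕ → Bool) : Finset ℕ := (nodes n).filter (fun i => c i = false)

/-- `sign_BW(ρ)`: the sign of the permutation sending `i` to the rank of `w_i = ρ(b_i)`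
among the white nodes, computed as `(-1)` to the number of inversions, i.e. the number of
pairs of black nodes `b < b'` with `ρ b > ρ b'`. -/
def signBW (n : ℕ) (c : ℕ → Bool) (ρ : ℕ → ℕ) : ℤ :=
  (-1 : ℤ) ^ (((nodes n ×ˢ nodes n).filter
    (fun p => c p.1 = true ∧ c p.2 = true ∧ p.1 < p.2 ∧ ρ p.2 < ρ p.1)).card)

/-- `sign_OE(π)`: the sign of the permutation sending `i` to `π(2i−1)/2`, computed as
`(-1)` to the number of pairs of odd nodes `a < b` with `π a > π b`. -/
def signOE (n : ℕ) (π : ℕ → ℕ) : ℤ :=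
  (-1 : ℤ) ^ (((nodes n ×ˢ nodes n).filter
    (fun p => p.1 % 2 = 1 ∧ p.2 % 2 = 1 ∧ p.1 < p.2 ∧ π p.2 < π p.1)).card)

/-- `a_{b,w}`: the number of indices `i` with `min b w ≤ i < max b w` such that nodes `i`
and `i+1` have the same color. -/
def aCount (c : ℕ → Bool) (b w : ℕ) : ℕ :=
  ((Finset.Ico (min b w) (max b w)).filter (fun i => c i = c (i + 1))).card

/-- `sign(b,w) = (−1)^{(|b−w| + a_{b,w} − 1)/2}` for a black node `b` and white node `w`. -/
def pairSign (c : ℕ → Bool) (b w : ℕ) : ℤ :=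
  (-1 : ℤ) ^ ((max b w - min b w + aCount c b w - 1) / 2)

/-- Cyclic successor of node `m` in `{1,…,2n}`. -/
def nextNode (n m : ℕ) : ℕ := if m = 2 * n then 1 else m + 1

/-- Couples of consecutive nodes of the same color, cyclically: indices `m ∈ {1,…,2n}`
with nodes `m` and `m+1` (cyclically) of the same color. -/
def couples (n : ℕ) (c : ℕ → Bool) : Finset ℕ :=
  (nodes n).filter (fun m => c m = c (nextNode n m))

/-- The value `φ(m)` for a couple `m`: writing `r` for the rank of `m` among couples of its
own color, `φ(m) = 2r` if `m` has the same color as node `1`, and `φ(m) = 2r − 1` otherwise. -/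
def phiCouple (n : ℕ) (c : ℕ → Bool) (m : ℕ) : ℕ :=
  if c m = c 1 then 2 * ((couples n c).filter (fun m' => c m' = c m ∧ m' ≤ m)).card
  else 2 * ((couples n c).filter (fun m' => c m' = c m ∧ m' ≤ m)).card - 1

/-- `sign_cons(N)`: the sign of the one-line permutation `(φ(n₁),…,φ(n_{2k}))`, computed
as `(-1)` to its number of inversions. -/
def signCons (n : ℕ) (c : ℕ → Bool) : ℤ :=
  (-1 : ℤ) ^ (((couples n c ×ˢ couples n c).filter
    (fun p => p.1 < p.2 ∧ phiCouple n c p.2 < phiCouple n c p.1)).card)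

/-- The set `T` of nodes that are odd and white, or even and black. -/
def Tset (n : ℕ) (c : ℕ → Bool) : Finset ℕ :=
  (nodes n).filter (fun i => (i % 2 = 1 ∧ c i = false) ∨ (i % 2 = 0 ∧ c i = true))

/-- A subset is balanced if it contains equally many black and white nodes. -/
def BalancedSubset (c : ℕ → Bool) (S : Finset ℕ) : Prop :=
  (S.filter (fun i => c i = true)).card = (S.filter (fun i => c i = false)).card

/-- `ρ` does not connect `S` to its complement: `ρ(S) = S`. -/
def Invariant (S : Finset ℕ) (ρ : ℕ → ℕ) : Prop := ∀ i ∈ S, ρ i ∈ S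

/-- Reachability under the subgroup generated by the involutions `π` and `ρ`. -/
def compRel (n : ℕ) (π ρ : ℕ → ℕ) (a b : ℕ) : Prop :=
  Relation.ReflTransGen (fun u v => u ∈ nodes n ∧ (v = π u ∨ v = ρ u)) a b

open scoped Classical in
/-- The number of components (orbits) of `π ∪ ρ` on the node set. -/
noncomputable def numComponents (n : ℕ) (π ρ : ℕ → ℕ) : ℕ :=
  ((nodes n).image (fun a => (nodes n).filter (fun b => compRel n π ρ a b))).card


/-- The cyclic interval of `{1,…,2n}` of length `len` starting at node `a`. -/
def cycInterval (n a len : ℕ) : Finset ℕ :=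
  (Finset.range len).image (fun t => (a - 1 + t) % (2 * n) + 1)

/-- A subset of `{1,…,2n}` is circularly contiguous if it is an interval in the cyclic
order `1, 2, …, 2n, 1`. -/
def IsCycContiguous (n : ℕ) (S : Finset ℕ) : Prop :=
  ∃ a len, S = cycInterval n a len

open Finset

section PlanarPairing

variable {n : ℕ} {ρ : ℕ → ℕ}

lemma mem_nodes {i : ℕ} : i ∈ nodes n ↔ 1 ≤ i ∧ i ≤ 2 * n := mem_Icc

lemma IsPairing.apply_eq_of_apply_eq (hp : IsPairing n ρ) {x y : ℕ} (hx : x ∈ nodes n)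
    (h : ρ x = y) : ρ y = x := h ▸ hp.invol x hx

lemma IsPairing.injOn (hp : IsPairing n ρ) : Set.InjOn ρ (nodes n) := fun a ha b hb hab => by
  rw [← hp.invol a ha, ← hp.invol b hb, hab]

lemma IsPairing.card_le_card_of_mapsTo (hp : IsPairing n ρ) {A C : Finset ℕ}
    (hA : A ⊆ nodes n) (h : ∀ x ∈ A, ρ x ∈ C) : A.card ≤ C.card :=
  card_le_card_of_injOn ρ h (hp.injOn.mono hA)

lemma isPlanar_iff :
    IsPlanar n ρ ↔ ∀ a ∈ nodes n, ∀ b ∈ nodes n, ¬ (a < b ∧ b < ρ a ∧ ρ a < ρ b) := by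
  simp only [IsPlanar, numCrossings, numCrossingsOn, card_eq_zero, filter_eq_empty_iff,
    mem_product, and_imp, Prod.forall]
  exact ⟨fun h a ha b hb => h a b ha hb, fun h a b ha hb => h a ha b hb⟩

lemma IsPlanar.lt_and_lt (hp : IsPairing n ρ) (hpl : IsPlanar n ρ) {i x : ℕ}
    (hi : i ∈ nodes n) (hx : x ∈ nodes n) (h₁ : i < x) (h₂ : x < ρ i) :
    i < ρ x ∧ ρ x < ρ i := by
  have hii := hp.invol i hi
  have hxx := hp.invol x hx
  have hxi : ρ x ≠ i := fun h => by rw [h] at hxx; omega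
  have hxρi : ρ x ≠ ρ i := fun h => by rw [h, hii] at hxx; omega
  rw [isPlanar_iff] at hpl
  constructor
  · by_contra! hle
    exact hpl (ρ x) (hp.maps x hx) i hi ⟨by omega, by omega, by omega⟩
  · by_contra! hle
    exact hpl i hi x hx ⟨h₁, h₂, by omega⟩

lemma IsPlanar.lt_or_lt (hp : IsPairing n ρ) (hpl : IsPlanar n ρ) {i x : ℕ}
    (hi : i ∈ nodes n) (hx : x ∈ nodes n) (hlt : i < ρ i) (h : x < i ∨ ρ i < x) :
    ρ x < i ∨ ρ i < ρ x := by
  have hxx := hp.invol x hx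
  have hxi : ρ x ≠ i := fun h => by rw [h] at hxx; omega
  have hxρi : ρ x ≠ ρ i := fun h => by rw [h, hp.invol i hi] at hxx; omega
  by_contra! hin
  have := hpl.lt_and_lt hp hi (hp.maps x hx) (by omega) (by omega)
  omega

end PlanarPairing

def NoChordIn (n : ℕ) (S : Finset ℕ) (ρ : ℕ → ℕ) : Prop :=
  ∀ i ∈ nodes n, i ∈ S → ρ i ∉ S

structure IsProperPlanar (n : ℕ) (R G B : Finset ℕ) (ρ : ℕ → ℕ) : Prop where
  pairing : IsPairing n ρ
  planar : IsPlanar n ρ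
  noChord₁ : NoChordIn n R ρ
  noChord₂ : NoChordIn n G ρ
  noChord₃ : NoChordIn n B ρ

section ProperPlanar

variable {n : ℕ} {R G B : Finset ℕ} {ρ : ℕ → ℕ}

lemma isProperPlanar_iff : IsProperPlanar n R G B ρ ↔ IsPairing n ρ ∧ IsPlanar n ρ ∧
    ∀ i ∈ nodes n, ¬ ((i ∈ R ∧ ρ i ∈ R) ∨ (i ∈ G ∧ ρ i ∈ G) ∨ (i ∈ B ∧ ρ i ∈ B)) := by
  refine ⟨fun ⟨hp, hpl, h₁, h₂, h₃⟩ => ⟨hp, hpl, fun i hi => ?_⟩,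
    fun ⟨hp, hpl, h⟩ => ⟨hp, hpl, ?_, ?_, ?_⟩⟩
  · rintro (⟨h, h'⟩ | ⟨h, h'⟩ | ⟨h, h'⟩)
    exacts [h₁ i hi h h', h₂ i hi h h', h₃ i hi h h']
  all_goals intro i hi h' h''; exact h i hi (by tauto)

lemma IsProperPlanar.swap₁₂ (h : IsProperPlanar n R G B ρ) : IsProperPlanar n G R B ρ :=
  ⟨h.pairing, h.planar, h.noChord₂, h.noChord₁, h.noChord₃⟩

lemma IsProperPlanar.swap₂₃ (h : IsProperPlanar n R G B ρ) : IsProperPlanar n R B G ρ :=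
  ⟨h.pairing, h.planar, h.noChord₁, h.noChord₃, h.noChord₂⟩

lemma NoChordIn.card_le (hR : NoChordIn n R ρ) (hp : IsPairing n ρ) (hRsub : R ⊆ nodes n)
    (hcover : nodes n ⊆ R ∪ G ∪ B) : R.card ≤ G.card + B.card := by
  refine (hp.card_le_card_of_mapsTo hRsub (C := G ∪ B) fun x hx => ?_).trans
    (card_union_le _ _)
  have hρx := hcover (hp.maps x (hRsub hx))
  have hρxR := hR x (hRsub hx) hx
  simp only [mem_union] at hρx ⊢
  tauto

lemma IsProperPlanar.triangle (h : IsProperPlanar n R G B ρ) (hunion : R ∪ G ∪ B = nodes n) :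
    R.card ≤ G.card + B.card ∧ G.card ≤ R.card + B.card ∧ B.card ≤ R.card + G.card := by
  have hsub : R ⊆ nodes n ∧ G ⊆ nodes n ∧ B ⊆ nodes n := by
    rw [← hunion]
    refine ⟨?_, ?_, ?_⟩ <;> intro x hx <;> simp [hx]
  refine ⟨h.noChord₁.card_le h.pairing hsub.1 hunion.ge,
    h.noChord₂.card_le h.pairing hsub.2.1 ?_, h.noChord₃.card_le h.pairing hsub.2.2 ?_⟩ <;>
  · rw [← hunion]
    intro x
    simp only [mem_union]
    tauto

end ProperPlanar

section NormalForm

variable {n r g : ℕ} {ρ : ℕ → ℕ}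

lemma union_Icc_eq_nodes (hrg : r + g ≤ 2 * n) :
    Icc 1 r ∪ Icc (r + 1) (r + g) ∪ Icc (r + g + 1) (2 * n) = nodes n := by
  ext x
  simp only [mem_union, mem_Icc, mem_nodes]
  omega

/-- The pairing that nests its chords around the three corners `r | r + 1`,
`r + g | r + g + 1` and `2n | 1`; they carry `r + g - n`, `n - r` and `n - g` chords. -/
def cornerPairing (n r g i : ℕ) : ℕ :=
  if i + g ≤ n then 2 * n + 1 - i
  else if i + n ≤ 2 * r + g then 2 * r + 1 - i
  else if i ≤ n + g then 2 * (r + g) + 1 - i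
  else 2 * n + 1 - i

lemma isProperPlanar_cornerPairing (hr : r ≤ n) (hg : g ≤ n) (hb : n ≤ r + g) :
    IsProperPlanar n (Icc 1 r) (Icc (r + 1) (r + g)) (Icc (r + g + 1) (2 * n))
      (cornerPairing n r g) := by
  refine ⟨⟨?_, ?_, ?_⟩, ?_, ?_, ?_, ?_⟩
  · intro i hi
    rw [mem_nodes] at hi ⊢
    unfold cornerPairing
    split_ifs <;> omega
  · intro i hi
    rw [mem_nodes] at hi
    unfold cornerPairing
    split_ifs <;> omega
  · intro i hi
    rw [mem_nodes] at hi
    unfold cornerPairing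
    split_ifs <;> omega
  · rw [isPlanar_iff]
    intro a ha b hb
    rw [mem_nodes] at ha hb
    unfold cornerPairing
    split_ifs <;> omega
  all_goals
    intro i hi
    rw [mem_nodes] at hi
    simp only [cornerPairing, mem_Icc]
    split_ifs <;> omega

lemma IsProperPlanar.triangle_Icc
    (h : IsProperPlanar n (Icc 1 r) (Icc (r + 1) (r + g)) (Icc (r + g + 1) (2 * n)) ρ)
    (hrg : r + g ≤ 2 * n) : r ≤ n ∧ g ≤ n ∧ n ≤ r + g := by
  have := h.triangle (union_Icc_eq_nodes hrg)
  simp only [Nat.card_Icc] at this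
  omega

lemma IsProperPlanar.corner₁₂_partner_le
    (h : IsProperPlanar n (Icc 1 r) (Icc (r + 1) (r + g)) (Icc (r + g + 1) (2 * n)) ρ)
    (hrg : r + g ≤ 2 * n) {k : ℕ} (hk : 1 ≤ k) (hkn : k + n ≤ r + g) :
    ρ (r + 1 - k) ≤ r + g := by
  have htri := h.triangle_Icc hrg
  obtain ⟨hp, hpl, hR, hG, -⟩ := h
  set i := r + 1 - k with hi_def
  have hi : i ∈ nodes n := mem_nodes.2 ⟨by omega, by omega⟩
  set j := ρ i
  have hj := mem_nodes.1 (hp.maps i hi)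
  by_contra! hjB
  -- The whole second arc lies under the chord `(i, j)`, and only nodes of the first and
  -- third arc lie outside it: counting both sides contradicts `k + n ≤ r + g`.
  have hGsub : Icc (r + 1) (r + g) ⊆ Icc (i + 1) (j - 1) := by
    intro x hx
    rw [mem_Icc] at hx ⊢
    omega
  have h₁ : (Icc (r + 1) (r + g)).card ≤ (Icc (i + 1) (j - 1) \ Icc (r + 1) (r + g)).card := by
    refine hp.card_le_card_of_mapsTo (fun x hx => mem_nodes.2 ?_) fun x hx => ?_ <;>
      rw [mem_Icc] at hx
    · omega
    have hx' : x ∈ nodes n := mem_nodes.2 ⟨by omega, by omega⟩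
    have hin := hpl.lt_and_lt hp hi hx' (by omega) (by omega)
    have hout := hG x hx' (mem_Icc.2 hx)
    rw [mem_Icc] at hout
    rw [mem_sdiff, mem_Icc, mem_Icc]
    omega
  have h₂ : (Icc 1 (i - 1)).card ≤ (Icc (j + 1) (2 * n)).card := by
    refine hp.card_le_card_of_mapsTo (fun x hx => mem_nodes.2 ?_) fun x hx => ?_ <;>
      rw [mem_Icc] at hx
    · omega
    have hx' : x ∈ nodes n := mem_nodes.2 ⟨by omega, by omega⟩
    have hout := hpl.lt_or_lt hp hi hx' (by omega) (Or.inl (by omega))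
    have hR' := hR x hx' (mem_Icc.2 ⟨by omega, by omega⟩)
    have hρx := mem_nodes.1 (hp.maps x hx')
    rw [mem_Icc] at hR' ⊢
    omega
  rw [card_sdiff_of_subset hGsub, Nat.card_Icc, Nat.card_Icc] at h₁
  rw [Nat.card_Icc, Nat.card_Icc] at h₂
  omega

lemma IsProperPlanar.corner₁₂
    (h : IsProperPlanar n (Icc 1 r) (Icc (r + 1) (r + g)) (Icc (r + g + 1) (2 * n)) ρ)
    (hrg : r + g ≤ 2 * n) {k : ℕ} (hk : 1 ≤ k) (hkn : k + n ≤ r + g) :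
    ρ (r + 1 - k) = r + k := by
  have htri := h.triangle_Icc hrg
  have hjG := h.corner₁₂_partner_le hrg hk hkn
  obtain ⟨hp, hpl, hR, hG, -⟩ := h
  set i := r + 1 - k with hi_def
  have hi : i ∈ nodes n := mem_nodes.2 ⟨by omega, by omega⟩
  set j := ρ i
  have hj := mem_nodes.1 (hp.maps i hi)
  have hjR : r < j := by
    have := hR i hi (mem_Icc.2 ⟨by omega, by omega⟩)
    simp only [mem_Icc, not_and, not_le] at this
    omega
  -- Under the chord `(i, j)` lie only nodes of the first two arcs, which pair across.
  have h₁ : (Icc (i + 1) r).card ≤ (Icc (r + 1) (j - 1)).card := by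
    refine hp.card_le_card_of_mapsTo (fun x hx => mem_nodes.2 ?_) fun x hx => ?_ <;>
      rw [mem_Icc] at hx
    · omega
    have hx' : x ∈ nodes n := mem_nodes.2 ⟨by omega, by omega⟩
    have hin := hpl.lt_and_lt hp hi hx' (by omega) (by omega)
    have hout := hR x hx' (mem_Icc.2 ⟨by omega, by omega⟩)
    rw [mem_Icc] at hout ⊢
    omega
  have h₂ : (Icc (r + 1) (j - 1)).card ≤ (Icc (i + 1) r).card := by
    refine hp.card_le_card_of_mapsTo (fun x hx => mem_nodes.2 ?_) fun x hx => ?_ <;>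
      rw [mem_Icc] at hx
    · omega
    have hx' : x ∈ nodes n := mem_nodes.2 ⟨by omega, by omega⟩
    have hin := hpl.lt_and_lt hp hi hx' (by omega) (by omega)
    have hout := hG x hx' (mem_Icc.2 ⟨by omega, by omega⟩)
    rw [mem_Icc] at hout ⊢
    omega
  rw [Nat.card_Icc, Nat.card_Icc] at h₁ h₂
  omega

end NormalForm

section Rotation

variable {n k : ℕ}

/-- Extended by the identity off the nodes so that `rot` below is a permutation of `ℕ`. -/
def rotFun (n k i : ℕ) : ℕ := if i ∈ nodes n then (i - 1 + k) % (2 * n) + 1 else i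

lemma rotFun_mem_nodes {i : ℕ} (hi : i ∈ nodes n) : rotFun n k i ∈ nodes n := by
  rw [mem_nodes] at hi ⊢
  have := Nat.mod_lt (i - 1 + k) (show 0 < 2 * n by omega)
  simp only [rotFun, mem_nodes, hi, and_self, if_true]
  omega

lemma rotFun_rotFun {k' i : ℕ} : rotFun n k' (rotFun n k i) = rotFun n (k + k') i := by
  by_cases hi : i ∈ nodes n
  · rw [rotFun, if_pos (rotFun_mem_nodes hi)]
    simp only [rotFun, if_pos hi, Nat.add_sub_cancel, Nat.mod_add_mod, Nat.add_assoc]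
  · simp only [rotFun, if_neg hi]

lemma rotFun_add_mul_sub_one {i : ℕ} : rotFun n (k + (2 * n - 1) * k) i = i := by
  by_cases hi : i ∈ nodes n
  · obtain ⟨m, rfl⟩ : ∃ m, n = m + 1 := Nat.exists_eq_add_one.2 (by rw [mem_nodes] at hi; omega)
    have hk : k + (2 * (m + 1) - 1) * k = 2 * (m + 1) * k := by
      rw [show 2 * (m + 1) - 1 = 2 * m + 1 by omega]
      ring
    rw [mem_nodes] at hi
    rw [rotFun, if_pos (mem_nodes.2 hi), hk, Nat.add_mul_mod_self_left,
      Nat.mod_eq_of_lt (by omega)]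
    omega
  · simp only [rotFun, if_neg hi]

def rot (n k : ℕ) : Equiv.Perm ℕ where
  toFun := rotFun n k
  invFun := rotFun n ((2 * n - 1) * k)
  left_inv _ := by rw [rotFun_rotFun, rotFun_add_mul_sub_one]
  right_inv _ := by rw [rotFun_rotFun, add_comm, rotFun_add_mul_sub_one]

lemma rot_symm : (rot n k).symm = rot n ((2 * n - 1) * k) := Equiv.ext fun _ => rfl

lemma rot_mem_nodes_iff {i : ℕ} : rot n k i ∈ nodes n ↔ i ∈ nodes n := by
  refine ⟨fun h => ?_, rotFun_mem_nodes⟩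
  by_contra hi
  rw [show rot n k i = i from if_neg hi] at h
  exact hi h

lemma rot_symm_mem_nodes_iff {i : ℕ} : (rot n k).symm i ∈ nodes n ↔ i ∈ nodes n := by
  rw [← rot_mem_nodes_iff (k := k), Equiv.apply_symm_apply]

lemma rot_apply_of_mem {i : ℕ} (hi : i ∈ nodes n) : rot n k i = (i - 1 + k) % (2 * n) + 1 :=
  if_pos hi

lemma rot_mod {i : ℕ} : rot n k i = rot n (k % (2 * n)) i := by
  change rotFun n k i = rotFun n (k % (2 * n)) i
  simp only [rotFun, Nat.add_mod_mod]

lemma rot_apply_of_le {i : ℕ} (hi : 1 ≤ i) (h : i + k ≤ 2 * n) : rot n k i = i + k := by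
  rw [rot_apply_of_mem (mem_nodes.2 ⟨hi, by omega⟩), Nat.mod_eq_of_lt (by omega)]
  omega

lemma rot_apply_of_lt {i : ℕ} (hi : i ≤ 2 * n) (hk : k ≤ 2 * n) (h : 2 * n < i + k) :
    rot n k i = i + k - 2 * n := by
  rw [rot_apply_of_mem (mem_nodes.2 ⟨by omega, hi⟩), Nat.mod_eq_sub_mod (by omega),
    Nat.mod_eq_of_lt (by omega)]
  omega

lemma rot_apply_cases {i : ℕ} (hi : i ∈ nodes n) :
    (i + k % (2 * n) ≤ 2 * n ∧ rot n k i = i + k % (2 * n)) ∨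
      (2 * n < i + k % (2 * n) ∧ rot n k i + 2 * n = i + k % (2 * n)) := by
  rw [mem_nodes] at hi
  have hk := Nat.mod_lt k (show 0 < 2 * n by omega)
  rw [rot_mod]
  rcases le_or_gt (i + k % (2 * n)) (2 * n) with h | h
  · exact Or.inl ⟨h, rot_apply_of_le hi.1 h⟩
  · exact Or.inr ⟨h, by rw [rot_apply_of_lt hi.2 hk.le h]; omega⟩

lemma image_rot_Icc_of_le {a c : ℕ} (ha : 1 ≤ a) (hc : c + k ≤ 2 * n) :
    (Icc a c).image (rot n k) = Icc (a + k) (c + k) := by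
  rw [← image_add_right_Icc]
  refine image_congr fun x hx => ?_
  rw [coe_Icc, Set.mem_Icc] at hx
  exact rot_apply_of_le (by omega) (by omega)

lemma image_rot_Icc_of_lt {a c : ℕ} (hc : c ≤ 2 * n) (hk : k ≤ 2 * n) (ha : 2 * n < a + k) :
    (Icc a c).image (rot n k) = Icc (a + k - 2 * n) (c + k - 2 * n) := by
  ext v
  simp only [mem_image, mem_Icc]
  constructor
  · rintro ⟨x, hx, rfl⟩
    rw [rot_apply_of_lt (by omega) hk (by omega)]
    omega
  · intro hv
    exact ⟨v + 2 * n - k, by omega, by rw [rot_apply_of_lt (by omega) hk (by omega)]; omega⟩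

lemma image_rot_nodes : (nodes n).image (rot n k) = nodes n :=
  eq_of_subset_of_card_le (fun _ hx => by
      obtain ⟨y, hy, rfl⟩ := mem_image.1 hx
      exact rot_mem_nodes_iff.2 hy)
    (card_image_of_injective _ (rot n k).injective).ge

end Rotation

def relabel (σ : Equiv.Perm ℕ) (ρ : ℕ → ℕ) (i : ℕ) : ℕ := σ (ρ (σ.symm i))

section Relabel

variable {n k : ℕ} {ρ : ℕ → ℕ}

lemma relabel_apply_apply (σ : Equiv.Perm ℕ) (i : ℕ) : relabel σ ρ (σ i) = σ (ρ i) := by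
  simp only [relabel, Equiv.symm_apply_apply]

lemma IsPairing.relabel_rot (hp : IsPairing n ρ) : IsPairing n (relabel (rot n k) ρ) where
  maps i hi := rot_mem_nodes_iff.2 (hp.maps _ (rot_symm_mem_nodes_iff.2 hi))
  invol i hi := by
    simp only [relabel, Equiv.symm_apply_apply, hp.invol _ (rot_symm_mem_nodes_iff.2 hi),
      Equiv.apply_symm_apply]
  nofix i hi h :=
    hp.nofix _ (rot_symm_mem_nodes_iff.2 hi) ((Equiv.eq_symm_apply _).2 h)

/-- A crossing after rotation is a crossing before it, read from one of its four endpoints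
according to which of them wrap around `2n`. -/
lemma IsPlanar.relabel_rot (hp : IsPairing n ρ) (hpl : IsPlanar n ρ) :
    IsPlanar n (relabel (rot n k) ρ) := by
  rw [isPlanar_iff] at hpl ⊢
  intro a ha b hb hcross
  obtain ⟨a, rfl⟩ := (rot n k).surjective a
  obtain ⟨b, rfl⟩ := (rot n k).surjective b
  rw [rot_mem_nodes_iff] at ha hb
  rw [relabel_apply_apply, relabel_apply_apply] at hcross
  have hc := hp.maps a ha
  have hd := hp.maps b hb
  have hca := hp.invol a ha
  have hdb := hp.invol b hb
  have ha' := mem_nodes.1 ha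
  have hb' := mem_nodes.1 hb
  have hc' := mem_nodes.1 hc
  have hd' := mem_nodes.1 hd
  rcases rot_apply_cases (k := k) ha with sa | sa <;>
    rcases rot_apply_cases (k := k) hb with sb | sb <;>
    rcases rot_apply_cases (k := k) hc with sc | sc <;>
    rcases rot_apply_cases (k := k) hd with sd | sd <;>
    first
      | exact hpl a ha b hb ⟨by omega, by omega, by omega⟩
      | exact hpl (ρ b) hd a ha ⟨by omega, by omega, by omega⟩
      | exact hpl (ρ a) hc (ρ b) hd ⟨by omega, by omega, by omega⟩
      | exact hpl b hb (ρ a) hc ⟨by omega, by omega, by omega⟩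

lemma NoChordIn.relabel_rot {S : Finset ℕ} (hS : NoChordIn n S ρ) :
    NoChordIn n (S.image (rot n k)) (relabel (rot n k) ρ) := by
  intro i hi hiS
  obtain ⟨s, hs, rfl⟩ := mem_image.1 hiS
  rw [relabel_apply_apply, (rot n k).injective.mem_finset_image]
  exact hS s (rot_mem_nodes_iff.1 hi) hs

variable {R G B : Finset ℕ}

lemma IsProperPlanar.relabel_rot (h : IsProperPlanar n R G B ρ) :
    IsProperPlanar n (R.image (rot n k)) (G.image (rot n k)) (B.image (rot n k))
      (relabel (rot n k) ρ) :=
  ⟨h.pairing.relabel_rot, h.planar.relabel_rot h.pairing, h.noChord₁.relabel_rot,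
    h.noChord₂.relabel_rot, h.noChord₃.relabel_rot⟩

lemma IsProperPlanar.relabel_rot_symm
    (h : IsProperPlanar n (R.image (rot n k)) (G.image (rot n k)) (B.image (rot n k)) ρ) :
    IsProperPlanar n R G B (relabel (rot n k).symm ρ) := by
  simpa only [← rot_symm, image_image, Equiv.symm_comp_self, image_id] using
    h.relabel_rot (k := (2 * n - 1) * k)

end Relabel

section Uniqueness

variable {n r g : ℕ} {ρ : ℕ → ℕ}

lemma IsProperPlanar.corner₁₂_rot {m : ℕ}
    (h : IsProperPlanar n ((Icc 1 r).image (rot n m)) ((Icc (r + 1) (r + g)).image (rot n m))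
      ((Icc (r + g + 1) (2 * n)).image (rot n m)) ρ)
    (hrg : r + g ≤ 2 * n) {k : ℕ} (hk : 1 ≤ k) (hkn : k + n ≤ r + g) :
    ρ (rot n m (r + 1 - k)) = rot n m (r + k) := by
  have := h.relabel_rot_symm.corner₁₂ hrg hk hkn
  rwa [relabel, Equiv.symm_apply_eq, Equiv.symm_symm] at this

lemma IsProperPlanar.corner₂₃
    (h : IsProperPlanar n (Icc 1 r) (Icc (r + 1) (r + g)) (Icc (r + g + 1) (2 * n)) ρ)
    (hrg : r + g ≤ 2 * n) {k : ℕ} (hk : 1 ≤ k) (hkn : k + r ≤ n) :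
    ρ (r + g + 1 - k) = r + g + k := by
  have htri := h.triangle_Icc hrg
  have h' : IsProperPlanar n ((Icc 1 g).image (rot n r))
      ((Icc (g + 1) (g + (2 * n - (r + g)))).image (rot n r))
      ((Icc (g + (2 * n - (r + g)) + 1) (2 * n)).image (rot n r)) ρ := by
    rw [image_rot_Icc_of_le le_rfl (by omega), image_rot_Icc_of_le (by omega) (by omega),
      image_rot_Icc_of_lt le_rfl (by omega) (by omega)]
    convert h.swap₁₂.swap₂₃ using 1 <;> congr 1 <;> omega
  have := h'.corner₁₂_rot (by omega) hk (by omega)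
  rwa [rot_apply_of_le (by omega) (by omega), rot_apply_of_le (by omega) (by omega),
    show g + 1 - k + r = r + g + 1 - k by omega, show g + k + r = r + g + k by omega] at this

lemma IsProperPlanar.corner₃₁
    (h : IsProperPlanar n (Icc 1 r) (Icc (r + 1) (r + g)) (Icc (r + g + 1) (2 * n)) ρ)
    (hrg : r + g ≤ 2 * n) {k : ℕ} (hk : 1 ≤ k) (hkn : k + g ≤ n) :
    ρ (2 * n + 1 - k) = k := by
  have htri := h.triangle_Icc hrg
  have h' : IsProperPlanar n ((Icc 1 (2 * n - (r + g))).image (rot n (r + g)))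
      ((Icc (2 * n - (r + g) + 1) (2 * n - (r + g) + r)).image (rot n (r + g)))
      ((Icc (2 * n - (r + g) + r + 1) (2 * n)).image (rot n (r + g))) ρ := by
    rw [image_rot_Icc_of_le le_rfl (by omega), image_rot_Icc_of_lt (by omega) hrg (by omega),
      image_rot_Icc_of_lt le_rfl hrg (by omega)]
    convert h.swap₂₃.swap₁₂ using 1 <;> congr 1 <;> omega
  have := h'.corner₁₂_rot (by omega) hk (by omega)
  rwa [rot_apply_of_le (by omega) (by omega), rot_apply_of_lt (by omega) hrg (by omega),
    show 2 * n - (r + g) + 1 - k + (r + g) = 2 * n + 1 - k by omega,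
    show 2 * n - (r + g) + k + (r + g) - 2 * n = k by omega] at this

lemma IsProperPlanar.eq_cornerPairing
    (h : IsProperPlanar n (Icc 1 r) (Icc (r + 1) (r + g)) (Icc (r + g + 1) (2 * n)) ρ)
    (hrg : r + g ≤ 2 * n) {i : ℕ} (hi : i ∈ nodes n) :
    ρ i = cornerPairing n r g i := by
  have htri := h.triangle_Icc hrg
  have hp := h.pairing
  rw [mem_nodes] at hi
  unfold cornerPairing
  split_ifs with h₁ h₂ h₃
  · exact hp.apply_eq_of_apply_eq (mem_nodes.2 ⟨by omega, by omega⟩)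
      (h.corner₃₁ hrg (k := i) (by omega) h₁)
  · rcases le_or_gt i r with hir | hir
    · have := h.corner₁₂ hrg (k := r + 1 - i) (by omega) (by omega)
      rwa [Nat.sub_sub_self (by omega), show r + (r + 1 - i) = 2 * r + 1 - i by omega] at this
    · have := hp.apply_eq_of_apply_eq (mem_nodes.2 ⟨by omega, by omega⟩)
        (h.corner₁₂ hrg (k := i - r) (by omega) (by omega))
      rwa [Nat.add_sub_cancel' hir.le, show r + 1 - (i - r) = 2 * r + 1 - i by omega] at this
  · rcases le_or_gt i (r + g) with hig | hig
    · have := h.corner₂₃ hrg (k := r + g + 1 - i) (by omega) (by omega)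
      rwa [Nat.sub_sub_self (by omega),
        show r + g + (r + g + 1 - i) = 2 * (r + g) + 1 - i by omega] at this
    · have := hp.apply_eq_of_apply_eq (mem_nodes.2 ⟨by omega, by omega⟩)
        (h.corner₂₃ hrg (k := i - (r + g)) (by omega) (by omega))
      rwa [Nat.add_sub_cancel' hig.le,
        show r + g + 1 - (i - (r + g)) = 2 * (r + g) + 1 - i by omega] at this
  · have := h.corner₃₁ hrg (k := 2 * n + 1 - i) (by omega) (by omega)
    rwa [Nat.sub_sub_self (by omega)] at this

end Uniqueness

def TriangleCriterion (n : ℕ) (R G B : Finset ℕ) : Prop :=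
  (R.card ≤ G.card + B.card → G.card ≤ R.card + B.card → B.card ≤ R.card + G.card →
      ∃ ρ, IsProperPlanar n R G B ρ) ∧
    ∀ ρ₁ ρ₂, IsProperPlanar n R G B ρ₁ → IsProperPlanar n R G B ρ₂ →
      ∀ i ∈ nodes n, ρ₁ i = ρ₂ i

section Criterion

variable {n : ℕ} {R G B : Finset ℕ}

lemma TriangleCriterion.swap₁₂ (h : TriangleCriterion n R G B) : TriangleCriterion n G R B :=
  ⟨fun h₁ h₂ h₃ => (h.1 (by omega) (by omega) (by omega)).imp fun _ => .swap₁₂,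
    fun ρ₁ ρ₂ h₁ h₂ => h.2 ρ₁ ρ₂ h₁.swap₁₂ h₂.swap₁₂⟩

lemma TriangleCriterion.swap₂₃ (h : TriangleCriterion n R G B) : TriangleCriterion n R B G :=
  ⟨fun h₁ h₂ h₃ => (h.1 (by omega) (by omega) (by omega)).imp fun _ => .swap₂₃,
    fun ρ₁ ρ₂ h₁ h₂ => h.2 ρ₁ ρ₂ h₁.swap₂₃ h₂.swap₂₃⟩

lemma TriangleCriterion.of_image_rot {k : ℕ}
    (h : TriangleCriterion n (R.image (rot n k)) (G.image (rot n k)) (B.image (rot n k))) :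
    TriangleCriterion n R G B := by
  simp only [TriangleCriterion, card_image_of_injective _ (rot n k).injective] at h
  refine ⟨fun h₁ h₂ h₃ => ?_, fun ρ₁ ρ₂ h₁ h₂ i hi => ?_⟩
  · obtain ⟨ρ, hρ⟩ := h.1 h₁ h₂ h₃
    exact ⟨_, hρ.relabel_rot_symm⟩
  · have := h.2 _ _ h₁.relabel_rot h₂.relabel_rot (rot n k i) (rot_mem_nodes_iff.2 hi)
    rw [relabel_apply_apply, relabel_apply_apply] at this
    exact (rot n k).injective this

lemma triangleCriterion_Icc {r g : ℕ} (hrg : r + g ≤ 2 * n) :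
    TriangleCriterion n (Icc 1 r) (Icc (r + 1) (r + g)) (Icc (r + g + 1) (2 * n)) := by
  refine ⟨fun h₁ h₂ h₃ => ⟨cornerPairing n r g, isProperPlanar_cornerPairing ?_ ?_ ?_⟩,
    fun ρ₁ ρ₂ h₁ h₂ i hi => by rw [h₁.eq_cornerPairing hrg hi, h₂.eq_cornerPairing hrg hi]⟩ <;>
  simp only [Nat.card_Icc] at h₁ h₂ h₃ <;> omega

end Criterion

section Arcs

variable {n : ℕ}

lemma cycInterval_mod (a len : ℕ) :
    cycInterval n a len = (range len).image (fun t => ((a - 1) % (2 * n) + t) % (2 * n) + 1) := by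
  simp only [cycInterval, Nat.mod_add_mod]

lemma image_rot_cycInterval (hn : 0 < n) (a len k : ℕ) :
    (cycInterval n a len).image (rot n k) = cycInterval n (a - 1 + k + 1) len := by
  simp only [cycInterval, image_image]
  refine image_congr fun t _ => ?_
  have hmem : (a - 1 + t) % (2 * n) + 1 ∈ nodes n :=
    mem_nodes.2 ⟨le_add_self, Nat.mod_lt _ (by omega)⟩
  simp only [Function.comp_apply, rot_apply_of_mem hmem, Nat.add_sub_cancel, Nat.mod_add_mod,
    Nat.add_right_comm]

lemma IsCycContiguous.image_rot {S : Finset ℕ} (hn : 0 < n) (hS : IsCycContiguous n S) (k : ℕ) :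
    IsCycContiguous n (S.image (rot n k)) := by
  obtain ⟨a, len, rfl⟩ := hS
  exact ⟨_, _, image_rot_cycInterval hn a len k⟩

lemma cycInterval_of_mod_eq_zero (hn : 0 < n) {a len : ℕ} (ha : (a - 1) % (2 * n) = 0) :
    cycInterval n a len = Icc 1 (min len (2 * n)) := by
  ext v
  simp only [cycInterval_mod, ha, zero_add, mem_image, mem_range, mem_Icc]
  constructor
  · rintro ⟨t, ht, rfl⟩
    have := Nat.mod_le t (2 * n)
    have := Nat.mod_lt t (show 0 < 2 * n by omega)
    omega
  · intro hv
    exact ⟨v - 1, by omega, by rw [Nat.mod_eq_of_lt (by omega)]; omega⟩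

lemma exists_eq_Icc_of_one_notMem {S : Finset ℕ} (hn : 0 < n) (hS : IsCycContiguous n S)
    (h1 : 1 ∉ S) : ∃ p q, S = Icc p q := by
  obtain ⟨a, len, rfl⟩ := hS
  rw [cycInterval_mod] at h1 ⊢
  set d := (a - 1) % (2 * n)
  have hd : d < 2 * n := Nat.mod_lt _ (by omega)
  by_cases hlen : d + len ≤ 2 * n
  · refine ⟨d + 1, d + len, ext fun v => ?_⟩
    simp only [mem_image, mem_range, mem_Icc]
    constructor
    · rintro ⟨t, ht, rfl⟩
      rw [Nat.mod_eq_of_lt (show d + t < 2 * n by omega)]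
      omega
    · intro hv
      refine ⟨v - 1 - d, by omega, ?_⟩
      rw [Nat.mod_eq_of_lt (show d + (v - 1 - d) < 2 * n by omega)]
      omega
  · refine absurd (mem_image.2 ⟨2 * n - d, mem_range.2 (by omega), ?_⟩) h1
    rw [Nat.add_sub_cancel' hd.le, Nat.mod_self]

lemma exists_Icc_of_partition {r p q : ℕ} {G B : Finset ℕ} (hr : 1 ≤ r)
    (hRG : Disjoint (Icc 1 r) G) (hRB : Disjoint (Icc 1 r) B) (hGB : Disjoint G B)
    (hunion : Icc 1 r ∪ G ∪ B = nodes n) (hG : G = Icc p q) (hB : r + 1 ∉ B) :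
    ∃ g, r + g ≤ 2 * n ∧ G = Icc (r + 1) (r + g) ∧ B = Icc (r + g + 1) (2 * n) := by
  have hmem : ∀ v, v ∈ nodes n ↔ v ∈ Icc 1 r ∨ v ∈ G ∨ v ∈ B := by
    simp only [← hunion, mem_union, or_assoc, implies_true]
  have hB' : ∀ v ∈ B, v ∉ Icc 1 r ∧ v ∉ G := fun v hv =>
    ⟨disjoint_right.1 hRB hv, disjoint_right.1 hGB hv⟩
  have hr2 := (hmem r).2 (Or.inl (mem_Icc.2 ⟨hr, le_rfl⟩))
  rw [mem_nodes] at hr2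
  obtain ⟨g, hg, rfl⟩ : ∃ g, r + g ≤ 2 * n ∧ G = Icc (r + 1) (r + g) := by
    rcases le_or_gt p q with hpq | hpq
    · have hp := (hmem p).2 (Or.inr (Or.inl (hG ▸ mem_Icc.2 ⟨le_rfl, hpq⟩)))
      have hq := (hmem q).2 (Or.inr (Or.inl (hG ▸ mem_Icc.2 ⟨hpq, le_rfl⟩)))
      have hpR := disjoint_right.1 hRG (hG ▸ mem_Icc.2 ⟨le_rfl, hpq⟩)
      have hr1 := hmem (r + 1)
      simp only [hG, mem_Icc, mem_nodes, hB, or_false] at hp hq hpR hr1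
      exact ⟨q - r, by omega, by rw [hG]; congr 1 <;> omega⟩
    · exact ⟨0, hr2.2, by rw [hG, Icc_eq_empty_of_lt hpq, Icc_eq_empty_of_lt (by omega)]⟩
  refine ⟨g, hg, rfl, ext fun v => ⟨fun hv => ?_, fun hv => ?_⟩⟩
  · have hvn := mem_nodes.1 ((hmem v).2 (Or.inr (Or.inr hv)))
    have hvRG := hB' v hv
    simp only [mem_Icc] at hvRG ⊢
    omega
  · rw [mem_Icc] at hv
    have hv' := (hmem v).1 (mem_nodes.2 ⟨by omega, hv.2⟩)
    simp only [mem_Icc] at hv'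
    exact (hv'.resolve_left (by omega)).resolve_left (by omega)

end Arcs

section Reduction

variable {n : ℕ} {R G B : Finset ℕ}

lemma triangleCriterion_of_Icc_one {r : ℕ} (hr : 1 ≤ r)
    (hRG : Disjoint (Icc 1 r) G) (hRB : Disjoint (Icc 1 r) B) (hGB : Disjoint G B)
    (hunion : Icc 1 r ∪ G ∪ B = nodes n) (hG : IsCycContiguous n G)
    (hB : IsCycContiguous n B) : TriangleCriterion n (Icc 1 r) G B := by
  have hn : 0 < n := by
    have := mem_nodes.1 (hunion ▸ mem_union_left _ (mem_union_left _ (mem_Icc.2 ⟨le_rfl, hr⟩)))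
    omega
  have h1 : ∀ S, Disjoint (Icc 1 r) S → 1 ∉ S := fun S hS =>
    disjoint_left.1 hS (mem_Icc.2 ⟨le_rfl, hr⟩)
  by_cases hB1 : r + 1 ∈ B
  · obtain ⟨p, q, hpq⟩ := exists_eq_Icc_of_one_notMem hn hB (h1 B hRB)
    obtain ⟨b, hb, rfl, rfl⟩ := exists_Icc_of_partition hr hRB hRG hGB.symm
      (by rw [← hunion, union_right_comm]) hpq (disjoint_right.1 hGB hB1)
    exact (triangleCriterion_Icc hb).swap₂₃
  · obtain ⟨p, q, hpq⟩ := exists_eq_Icc_of_one_notMem hn hG (h1 G hRG)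
    obtain ⟨g, hg, rfl, rfl⟩ := exists_Icc_of_partition hr hRG hRB hGB hunion hpq hB1
    exact triangleCriterion_Icc hg

lemma triangleCriterion_of_isCycContiguous
    (hRG : Disjoint R G) (hRB : Disjoint R B) (hGB : Disjoint G B)
    (hunion : R ∪ G ∪ B = nodes n)
    (hR : IsCycContiguous n R) (hG : IsCycContiguous n G) (hB : IsCycContiguous n B) :
    TriangleCriterion n R G B := by
  rcases Nat.eq_zero_or_pos n with rfl | hn
  · have hempty : R ∪ G ∪ B = ∅ := hunion.trans (by simp [nodes])
    simp only [union_eq_empty] at hempty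
    obtain ⟨⟨rfl, rfl⟩, rfl⟩ := hempty
    simpa using triangleCriterion_Icc (n := 0) (r := 0) (g := 0) le_rfl
  wlog hR1 : R.Nonempty generalizing R G B with H
  · obtain ⟨x, hx⟩ : (R ∪ G ∪ B).Nonempty := hunion ▸ ⟨1, mem_nodes.2 ⟨le_rfl, by omega⟩⟩
    simp only [mem_union] at hx
    rcases hx with (hx | hx) | hx
    · exact absurd ⟨x, hx⟩ hR1
    · exact (H hRG.symm hGB hRB (by rw [← hunion]; ac_rfl) hG hR hB ⟨x, hx⟩).swap₁₂
    · exact (H hRB.symm hGB.symm hRG (by rw [← hunion]; ac_rfl) hB hR hG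
        ⟨x, hx⟩).swap₁₂.swap₂₃
  obtain ⟨a, len, rfl⟩ := hR
  have hlen : 0 < len := by
    obtain ⟨x, hx⟩ := hR1
    obtain ⟨t, ht, -⟩ := mem_image.1 hx
    exact Nat.zero_lt_of_lt (mem_range.1 ht)
  set k := 2 * n - (a - 1) % (2 * n)
  have hR' : (cycInterval n a len).image (rot n k) = Icc 1 (min len (2 * n)) := by
    refine (image_rot_cycInterval hn a len k).trans (cycInterval_of_mod_eq_zero hn ?_)
    rw [Nat.add_sub_cancel, ← Nat.mod_add_mod,
      Nat.add_sub_cancel' (Nat.mod_lt _ (show 0 < 2 * n by omega)).le, Nat.mod_self]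
  have himage {S T : Finset ℕ} : Disjoint S T → Disjoint (S.image (rot n k)) (T.image (rot n k)) :=
    (disjoint_image (rot n k).injective).2
  refine TriangleCriterion.of_image_rot (k := k) ?_
  rw [hR']
  exact triangleCriterion_of_Icc_one (by omega) (hR' ▸ himage hRG) (hR' ▸ himage hRB)
    (himage hGB) (by rw [← hR', ← image_union, ← image_union, hunion, image_rot_nodes])
    (hG.image_rot hn k) (hB.image_rot hn k)

end Reduction

/-- if the nodes are partitioned into three circularly contiguous arcs
`R`, `G`, `B`, a planar pairing with no pair inside a single arc exists iff the arc sizes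
satisfy the triangle inequality, and when it exists it is unique. -/
theorem statement18 (n : ℕ) (R G B : Finset ℕ)
    (hRG : Disjoint R G) (hRB : Disjoint R B) (hGB : Disjoint G B)
    (hunion : R ∪ G ∪ B = nodes n)
    (hR : IsCycContiguous n R) (hG : IsCycContiguous n G) (hB : IsCycContiguous n B) :
    ((∃ ρ : ℕ → ℕ, IsPairing n ρ ∧ IsPlanar n ρ ∧
        ∀ i ∈ nodes n,
          ¬ ((i ∈ R ∧ ρ i ∈ R) ∨ (i ∈ G ∧ ρ i ∈ G) ∨ (i ∈ B ∧ ρ i ∈ B)))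
      ↔ (R.card ≤ G.card + B.card ∧ G.card ≤ R.card + B.card ∧
          B.card ≤ R.card + G.card)) ∧
    (∀ ρ₁ ρ₂ : ℕ → ℕ,
      (IsPairing n ρ₁ ∧ IsPlanar n ρ₁ ∧
        ∀ i ∈ nodes n,
          ¬ ((i ∈ R ∧ ρ₁ i ∈ R) ∨ (i ∈ G ∧ ρ₁ i ∈ G) ∨ (i ∈ B ∧ ρ₁ i ∈ B))) →
      (IsPairing n ρ₂ ∧ IsPlanar n ρ₂ ∧
        ∀ i ∈ nodes n,
          ¬ ((i ∈ R ∧ ρ₂ i ∈ R) ∨ (i ∈ G ∧ ρ₂ i ∈ G) ∨ (i ∈ B ∧ ρ₂ i ∈ B))) →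
      ∀ i ∈ nodes n, ρ₁ i = ρ₂ i) := by
  have hcrit := triangleCriterion_of_isCycContiguous hRG hRB hGB hunion hR hG hB
  simp only [← isProperPlanar_iff]
  exact ⟨⟨fun ⟨_, hρ⟩ => hρ.triangle hunion, fun ⟨h₁, h₂, h₃⟩ => hcrit.1 h₁ h₂ h₃⟩, hcrit.2⟩

end DD
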